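/- arXiv:2309.01762 — 7 statements merged into one kernel-verified Lean document; each statement's English description precedes it below -/
import Mathlib

section
/- Let (a_i)_{i=1}^r be positive integers. Then the number of r-tuples (x_1,...,x_r) of non-negative integers satisfying sum_{i=1}^r x_i/a_i < 1 is at most (1 + sum_{i=1}^r 1/a_i)^r * (prod_{i=1}^r a_i) / r!. -/
open Finset

lemma multiset_card_sum {ι α : Type*} (s : Finset ι) (f : ι → Multiset α) :
    Multiset.card (∑ i ∈ s, f i) = ∑ i ∈ s, Multiset.card (f i) := by
  classical
  induction s using Finset.cons_induction <;> simp [*]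

instance finite_sum_le (k M : ℕ) : Finite {z : Fin k → ℕ // ∑ i, z i ≤ M} := by
  refine Finite.of_injective (fun z i => (⟨z.1 i, ?_⟩ : Fin (M + 1))) ?_
  · exact Nat.lt_succ_of_le (le_trans
      (Finset.single_le_sum (f := z.1) (fun i _ => Nat.zero_le _) (mem_univ i)) z.2)
  · intro z w h
    apply Subtype.ext
    funext i
    exact congrArg Fin.val (congrFun h i)

lemma card_sum_le_aux (k M : ℕ) :
    Nat.card {z : Fin k → ℕ // ∑ i, z i ≤ M} ≤ (M + k).choose k := by
  classical
  let F : {z : Fin k → ℕ // ∑ i, z i ≤ M} → Sym (Fin (k + 1)) M := fun z =>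
    ⟨(M - ∑ i, z.1 i) • ({(0 : Fin (k + 1))} : Multiset (Fin (k + 1)))
        + ∑ i : Fin k, z.1 i • ({i.succ} : Multiset (Fin (k + 1))), by
      simp only [Multiset.card_add, Multiset.card_nsmul, Multiset.card_singleton, mul_one,
        multiset_card_sum]
      omega⟩
  have hcount : ∀ (z : {z : Fin k → ℕ // ∑ i, z i ≤ M}) (j : Fin k),
      Multiset.count j.succ (F z : Multiset (Fin (k + 1))) = z.1 j := by
    intro z j
    show Multiset.count j.succ
      ((M - ∑ i, z.1 i) • ({(0 : Fin (k + 1))} : Multiset (Fin (k + 1)))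
        + ∑ i : Fin k, z.1 i • ({i.succ} : Multiset (Fin (k + 1)))) = z.1 j
    simp only [Multiset.count_add, Multiset.count_nsmul, Multiset.count_singleton,
      Multiset.count_sum']
    rw [if_neg (Fin.succ_ne_zero j)]
    simp only [mul_ite, mul_one, mul_zero, Fin.succ_inj, zero_add]
    rw [Finset.sum_ite_eq univ j (fun i => z.1 i)]
    simp
  have hinj : Function.Injective F := by
    intro z w h
    apply Subtype.ext
    funext j
    have := congrArg (fun m : Sym (Fin (k + 1)) M =>
      Multiset.count j.succ (m : Multiset (Fin (k + 1)))) h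
    simpa [hcount z j, hcount w j] using this
  calc Nat.card {z : Fin k → ℕ // ∑ i, z i ≤ M}
      ≤ Nat.card (Sym (Fin (k + 1)) M) := Nat.card_le_card_of_injective F hinj
    _ = (M + k).choose k := by
        rw [Nat.card_eq_fintype_card, Sym.card_sym_eq_choose]
        rw [Fintype.card_fin]
        have h1 : k + 1 + M - 1 = M + k := by omega
        rw [h1]
        have h2 := Nat.choose_symm (Nat.le_add_left k M)
        rw [Nat.add_sub_cancel] at h2
        exact h2

/-- upper bound on the number of non-negative integer solutions to
`∑ x_i / a_i < 1`. -/
theorem stmt0 (r : ℕ) (hr : 0 < r) (a : Fin r → ℕ) (ha : ∀ i, 0 < a i) :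
    (Nat.card {x : Fin r → ℕ | ∑ i, (x i : ℝ) / (a i : ℝ) < 1} : ℝ) ≤
      (1 + ∑ i, ((a i : ℝ))⁻¹) ^ r * (∏ i, (a i : ℝ)) / (Nat.factorial r : ℝ) := by
  classical
  set P : ℕ := ∏ i, a i with hP
  have hPpos : 0 < P := Finset.prod_pos (fun i _ => ha i)
  set b : Fin r → ℕ := fun i => P / a i with hb
  have hba : ∀ i, b i * a i = P := fun i =>
    Nat.div_mul_cancel (Finset.dvd_prod_of_mem a (mem_univ i))
  have hbpos : ∀ i, 0 < b i := by
    intro i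
    rcases Nat.eq_zero_or_pos (b i) with h | h
    · exfalso; have := hba i; rw [h, zero_mul] at this; omega
    · exact h
  -- translate the set
  have hset : {x : Fin r → ℕ | ∑ i, (x i : ℝ) / (a i : ℝ) < 1}
      = {x : Fin r → ℕ | ∑ i, x i * b i < P} := by
    ext x
    simp only [Set.mem_setOf_eq]
    have hcast : ∑ i, (x i : ℝ) / (a i : ℝ) = ((∑ i, x i * b i : ℕ) : ℝ) / (P : ℝ) := by
      push_cast
      rw [Finset.sum_div]
      refine Finset.sum_congr rfl fun i _ => ?_
      rw [div_eq_div_iff (by exact_mod_cast (ha i).ne') (by exact_mod_cast hPpos.ne')]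
      have h1 : (b i : ℝ) * (a i : ℝ) = (P : ℝ) := by exact_mod_cast congrArg Nat.cast (hba i)
      rw [← h1]; ring
    rw [hcast, div_lt_one (by exact_mod_cast hPpos)]
    exact Nat.cast_lt
  rw [hset]
  set s : Set (Fin r → ℕ) := {x : Fin r → ℕ | ∑ i, x i * b i < P} with hs
  set B : ℕ := ∑ i, b i with hB
  set M : ℕ := (P - 1) + ∑ i, (b i - 1) with hM
  -- key counting inequality
  have key : Nat.card s * ∏ i, b i ≤ (M + r).choose r := by
    let g : ↥s × (∀ i, Fin (b i)) → {z : Fin r → ℕ // ∑ i, z i ≤ M} := fun p =>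
      ⟨fun i => (p.1 : Fin r → ℕ) i * b i + (p.2 i : ℕ), by
        have hx : ∑ i, (p.1 : Fin r → ℕ) i * b i ≤ P - 1 := Nat.le_sub_one_of_lt p.1.2
        have ht : ∀ i, (p.2 i : ℕ) ≤ b i - 1 := fun i => Nat.le_sub_one_of_lt (p.2 i).2
        calc ∑ i, ((p.1 : Fin r → ℕ) i * b i + (p.2 i : ℕ))
            = ∑ i, (p.1 : Fin r → ℕ) i * b i + ∑ i, ((p.2 i : ℕ)) := Finset.sum_add_distrib
          _ ≤ (P - 1) + ∑ i, (b i - 1) :=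
              add_le_add hx (Finset.sum_le_sum fun i _ => ht i)⟩
    have hg : Function.Injective g := by
      rintro ⟨⟨x, hx⟩, t⟩ ⟨⟨y, hy⟩, u⟩ h
      have h' : ∀ i, x i * b i + (t i : ℕ) = y i * b i + (u i : ℕ) := fun i =>
        congrFun (congrArg Subtype.val h) i
      have hxy : ∀ i, x i = y i ∧ (t i : ℕ) = (u i : ℕ) := by
        intro i
        have h2 := h' i
        have e1 : ((t i : ℕ) + x i * b i) / b i = x i := by
          rw [Nat.add_mul_div_right _ _ (hbpos i), Nat.div_eq_of_lt (t i).2, zero_add]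
        have e2 : ((u i : ℕ) + y i * b i) / b i = y i := by
          rw [Nat.add_mul_div_right _ _ (hbpos i), Nat.div_eq_of_lt (u i).2, zero_add]
        have hxeq : x i = y i := by
          rw [← e1, ← e2]
          congr 1
          omega
        exact ⟨hxeq, by rw [hxeq] at h2; omega⟩
      refine Prod.ext ?_ ?_
      · apply Subtype.ext; funext i; exact (hxy i).1
      · funext i; exact Fin.ext (hxy i).2
    calc Nat.card ↥s * ∏ i, b i = Nat.card (↥s × ∀ i, Fin (b i)) := by
          rw [Nat.card_prod]
          congr 1
          simp [Nat.card_eq_fintype_card]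
      _ ≤ Nat.card {z : Fin r → ℕ // ∑ i, z i ≤ M} := Nat.card_le_card_of_injective g hg
      _ ≤ (M + r).choose r := card_sum_le_aux r M
  -- arithmetic
  have hBr : M + r = (P - 1) + B := by
    have h1 : ∑ i, (b i - 1) + r = B := by
      have : ∑ i, (b i - 1) + ∑ _i : Fin r, 1 = ∑ i, ((b i - 1) + 1) :=
        (Finset.sum_add_distrib).symm
      simp only [Finset.sum_const, card_univ, Fintype.card_fin, smul_eq_mul, mul_one] at this
      rw [this]
      exact Finset.sum_congr rfl fun i _ => Nat.sub_add_cancel (hbpos i)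
    omega
  have hPpos' : (0 : ℝ) < P := by exact_mod_cast hPpos
  have hbProdPos : (0 : ℝ) < ∏ i, (b i : ℝ) :=
    Finset.prod_pos fun i _ => by exact_mod_cast hbpos i
  have hfactpos : (0 : ℝ) < (Nat.factorial r : ℝ) := by exact_mod_cast Nat.factorial_pos r
  have hMr : ((M + r : ℕ) : ℝ) ≤ (P : ℝ) + (B : ℝ) := by
    rw [hBr]
    push_cast
    have : ((P - 1 : ℕ) : ℝ) ≤ (P : ℝ) := by
      exact_mod_cast Nat.sub_le P 1
    linarith
  have key2 : (Nat.card ↥s : ℝ) * (∏ i, (b i : ℝ)) ≤ ((P : ℝ) + B) ^ r / (Nat.factorial r) := by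
    calc (Nat.card ↥s : ℝ) * ∏ i, (b i : ℝ)
        = ((Nat.card ↥s * ∏ i, b i : ℕ) : ℝ) := by push_cast; ring
      _ ≤ (((M + r).choose r : ℕ) : ℝ) := by exact_mod_cast key
      _ ≤ (((M + r : ℕ) : ℝ)) ^ r / (Nat.factorial r) := Nat.choose_le_pow_div r (M + r)
      _ ≤ ((P : ℝ) + B) ^ r / (Nat.factorial r) := by
          gcongr
  -- product of b's
  have hprodb : (∏ i, (b i : ℝ)) * (P : ℝ) = (P : ℝ) ^ r := by
    have hn : (∏ i, b i) * P = P ^ r := by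
      calc (∏ i, b i) * P = (∏ i, b i) * ∏ i, a i := by rw [hP]
        _ = ∏ i, (b i * a i) := (Finset.prod_mul_distrib).symm
        _ = ∏ _i : Fin r, P := Finset.prod_congr rfl fun i _ => hba i
        _ = P ^ r := by simp
    exact_mod_cast congrArg Nat.cast hn
  -- RHS rewriting
  have hinv : ∀ i, ((a i : ℝ))⁻¹ = (b i : ℝ) / (P : ℝ) := by
    intro i
    have h1 : (b i : ℝ) * (a i : ℝ) = (P : ℝ) := by exact_mod_cast congrArg Nat.cast (hba i)
    have hai : (0 : ℝ) < (a i : ℝ) := by exact_mod_cast ha i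
    field_simp
    linarith [h1]
  have hRHS : (1 + ∑ i, ((a i : ℝ))⁻¹) = ((P : ℝ) + B) / P := by
    rw [add_div, div_self (ne_of_gt hPpos')]
    congr 1
    rw [Finset.sum_congr rfl fun i _ => hinv i, ← Finset.sum_div]
    congr 1
    rw [hB]; push_cast; rfl
  have hprodA : (∏ i, (a i : ℝ)) = (P : ℝ) := by rw [hP]; push_cast; rfl
  rw [hRHS, hprodA]
  rw [div_pow]
  have hfinal : ((P : ℝ) + B) ^ r / (P : ℝ) ^ r * (P : ℝ) / (Nat.factorial r)
      = (((P : ℝ) + B) ^ r / (Nat.factorial r)) / (∏ i, (b i : ℝ)) := by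
    rw [eq_div_iff (ne_of_gt hbProdPos)]
    field_simp
    rw [← hprodb]
    ring
  rw [hfinal, le_div_iff₀ hbProdPos]
  exact key2
end

section
/- Let (a_i)_{i=1}^r be positive integers and let 0 ≤ s < r. Then the number of r-tuples (x_1,...,x_r) of non-negative integers satisfying sum_{i=1}^r x_i/a_i < 1 is at least (1 - sum_{i=s+1}^r 1/a_i)^{r-s} * (prod_{i=s+1}^r a_i) / (r-s)!, provided sum_{i=s+1}^r 1/a_i ≤ 1. -/
/-!
The lattice points `x` with `∑ xᵢ / aᵢ < c` dominate the volume `cⁿ ∏ aᵢ / n!` of the simplex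
they cut out: slicing by the first coordinate `x₀ = k` leaves the same problem in one variable
fewer with `c - k / a₀`, and `∑_{k < c a₀} (c - k/a₀)ⁿ⁻¹` is an upper Riemann sum for
`a₀ ∫₀^c tⁿ⁻¹ dt = a₀ cⁿ / n`. The bound with `1 - ∑_{i ≥ s} 1/aᵢ ∈ [0, 1]` is weaker, and
solutions in the variables `i ≥ s` extend by zero to solutions in all variables.
-/

open Finset Function

section

variable {ι κ : Type*} [Fintype ι] [Fintype κ]

def latticePointsBelow (a : ι → ℕ) (c : ℝ) : Set (ι → ℕ) :=
  {x | ∑ i, (x i : ℝ) / a i < c}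

theorem finite_latticePointsBelow {a : ι → ℕ} (ha : ∀ i, 0 < a i) (c : ℝ) :
    (latticePointsBelow a c).Finite := by
  classical
  refine (Set.finite_Iic fun i => ⌊c * a i⌋₊).subset fun x hx i => Nat.le_floor ?_
  have hxi : (x i : ℝ) / a i < c := by
    refine (single_le_sum (f := fun j => (x j : ℝ) / a j) ?_ (mem_univ i)).trans_lt hx
    exact fun j _ => by positivity
  rw [div_lt_iff₀ (by exact_mod_cast ha i)] at hxi
  exact hxi.le

theorem card_latticePointsBelow_comp_le {f : κ → ι} (hf : Injective f) {a : ι → ℕ}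
    (ha : ∀ i, 0 < a i) (c : ℝ) :
    Nat.card (latticePointsBelow (a ∘ f) c) ≤ Nat.card (latticePointsBelow a c) := by
  have := (finite_latticePointsBelow ha c).to_subtype
  refine Nat.card_le_card_of_injective (fun x => ⟨extend f x.1 (0 : ι → ℕ), ?_⟩)
    fun x y hxy => ?_
  · have hsum : ∑ k, (x.1 k : ℝ) / a (f k) =
        ∑ i, ((extend f x.1 (0 : ι → ℕ) i : ℕ) : ℝ) / a i :=
      Fintype.sum_of_injective f hf _ _ (fun i hi => by simp [extend_apply' _ _ _ hi])
        fun k => by rw [hf.extend_apply]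
    exact hsum.symm.trans_lt x.2
  · ext k
    simpa [hf.extend_apply] using congrFun (congrArg Subtype.val hxy) (f k)

end

theorem cons_mem_latticePointsBelow {n : ℕ} {a : Fin (n + 1) → ℕ} {c : ℝ} (k : ℕ)
    (y : Fin n → ℕ) :
    Fin.cons k y ∈ latticePointsBelow a c ↔
      y ∈ latticePointsBelow (Fin.tail a) (c - k / a 0) := by
  simp only [latticePointsBelow, Set.mem_ofPred_eq, Fin.sum_univ_succ, Fin.cons_zero,
    Fin.cons_succ, Fin.tail, lt_sub_iff_add_lt']

theorem sum_card_latticePointsBelow_tail_le {n : ℕ} {a : Fin (n + 1) → ℕ}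
    (ha : ∀ i, 0 < a i) (c : ℝ) (m : ℕ) :
    ∑ k ∈ range m, Nat.card (latticePointsBelow (Fin.tail a) (c - k / a 0)) ≤
      Nat.card (latticePointsBelow a c) := by
  have := (finite_latticePointsBelow ha c).to_subtype
  have (k : ℕ) :=
    (finite_latticePointsBelow (a := Fin.tail a) (fun _ => ha _) (c - k / a 0)).to_subtype
  rw [← Fin.sum_univ_eq_sum_range, ← Nat.card_sigma]
  refine Nat.card_le_card_of_injective
    (fun p => ⟨Fin.cons (p.1 : ℕ) p.2.1, (cons_mem_latticePointsBelow _ _).2 p.2.2⟩) ?_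
  rintro ⟨k, y⟩ ⟨k', y'⟩ h
  have h' : (Fin.cons (k : ℕ) y.1 : Fin (n + 1) → ℕ) = Fin.cons (k' : ℕ) y'.1 :=
    congrArg Subtype.val h
  obtain ⟨hk, hy⟩ := Fin.cons_inj.1 h'
  obtain rfl := Fin.ext hk
  obtain rfl := Subtype.ext hy
  rfl

theorem pow_succ_sub_pow_succ_le {d e : ℝ} (n : ℕ) (he : 0 ≤ e) (hed : e ≤ d) :
    d ^ (n + 1) - e ^ (n + 1) ≤ (n + 1) * d ^ n * (d - e) := by
  have h := abs_pow_sub_pow_le d e (n + 1)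
  rw [abs_of_nonneg (sub_nonneg.2 hed), abs_of_nonneg (he.trans hed), abs_of_nonneg he,
    max_eq_left hed, Nat.add_sub_cancel, Nat.cast_succ] at h
  linarith [le_abs_self (d ^ (n + 1) - e ^ (n + 1))]

theorem mul_pow_succ_le_sum_range {A d : ℝ} (n : ℕ) (hA : 0 < A) (hd : 0 ≤ d) :
    A * d ^ (n + 1) ≤ (n + 1) * ∑ k ∈ range ⌈d * A⌉₊, (d - k / A) ^ n := by
  set m := ⌈d * A⌉₊
  let f : ℕ → ℝ := fun k => max (d - k / A) 0
  have hf0 : f 0 = d := by simp [f, hd]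
  have hfm : f m = 0 :=
    max_eq_right (sub_nonpos.2 ((le_div_iff₀ hA).2 (Nat.le_ceil _)))
  have hstep (k : ℕ) : f k ^ (n + 1) - f (k + 1) ^ (n + 1) ≤ (n + 1) * f k ^ n / A := by
    have hle : f (k + 1) ≤ f k := by simp only [f]; gcongr; simp
    have hgap : f k - f (k + 1) ≤ 1 / A := by
      refine sub_le_iff_le_add.2 (max_le ?_ (by positivity))
      have : d - (k + 1 : ℕ) / A ≤ f (k + 1) := le_max_left _ _
      push_cast at this
      linarith [add_div (k : ℝ) 1 A]
    calc f k ^ (n + 1) - f (k + 1) ^ (n + 1) ≤ (n + 1) * f k ^ n * (f k - f (k + 1)) :=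
          pow_succ_sub_pow_succ_le n (le_max_right _ _) hle
      _ ≤ (n + 1) * f k ^ n * (1 / A) := by gcongr
      _ = (n + 1) * f k ^ n / A := by ring
  have hpos : ∀ k ∈ range m, f k = d - k / A := fun k hk =>
    max_eq_left (sub_nonneg.2 ((div_le_iff₀ hA).2 (Nat.lt_ceil.1 (mem_range.1 hk)).le))
  calc A * d ^ (n + 1) = A * ∑ k ∈ range m, (f k ^ (n + 1) - f (k + 1) ^ (n + 1)) := by
        rw [sum_range_sub', hf0, hfm, zero_pow n.succ_ne_zero, sub_zero]
    _ ≤ A * ∑ k ∈ range m, (n + 1) * f k ^ n / A := by gcongr with k; exact hstep k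
    _ = (n + 1) * ∑ k ∈ range m, f k ^ n := by
        rw [mul_sum, mul_sum]; congr! 1 with k; field_simp
    _ = (n + 1) * ∑ k ∈ range m, (d - k / A) ^ n := by
        rw [sum_congr rfl fun k hk => by rw [hpos k hk]]

open Nat in
theorem le_card_latticePointsBelow_fin {n : ℕ} {a : Fin n → ℕ} (ha : ∀ i, 0 < a i) {c : ℝ}
    (hc : 0 < c) : c ^ n * (∏ i, (a i : ℝ)) / n ! ≤ Nat.card (latticePointsBelow a c) := by
  induction n generalizing c with
  | zero =>
    have : latticePointsBelow a c = Set.univ := Set.eq_univ_of_forall fun x => by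
      simpa [latticePointsBelow] using hc
    simp [this]
  | succ n ih =>
    set A : ℝ := (a 0 : ℝ)
    have hA : 0 < A := Nat.cast_pos.2 (ha 0)
    set P := ∏ i, (Fin.tail a i : ℝ)
    have hprod : ∏ i, (a i : ℝ) = A * P := Fin.prod_univ_succ _
    have hslice : ∀ k ∈ range ⌈c * A⌉₊,
        (c - k / A) ^ n * P / n ! ≤ Nat.card (latticePointsBelow (Fin.tail a) (c - k / A)) :=
      fun k hk => ih (a := Fin.tail a) (fun _ => ha _) <| sub_pos.2 <|
        (div_lt_iff₀ hA).2 (Nat.lt_ceil.1 (mem_range.1 hk))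
    calc c ^ (n + 1) * (∏ i, (a i : ℝ)) / (n + 1)!
        = A * c ^ (n + 1) / (n + 1) * (P / n !) := by
          rw [hprod, factorial_succ]; push_cast; field_simp
      _ ≤ (∑ k ∈ range ⌈c * A⌉₊, (c - k / A) ^ n) * (P / n !) := by
          gcongr
          rw [div_le_iff₀ (by positivity), mul_comm _ ((n : ℝ) + 1)]
          exact mul_pow_succ_le_sum_range n hA hc.le
      _ = ∑ k ∈ range ⌈c * A⌉₊, (c - k / A) ^ n * P / n ! := by
          rw [sum_mul]; simp only [mul_div_assoc]
      _ ≤ ∑ k ∈ range ⌈c * A⌉₊, (Nat.card (latticePointsBelow (Fin.tail a) (c - k / A)) : ℝ) :=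
          sum_le_sum hslice
      _ ≤ Nat.card (latticePointsBelow a c) := by
          exact_mod_cast sum_card_latticePointsBelow_tail_le ha c _

open Nat in
theorem le_card_latticePointsBelow {ι : Type*} [Fintype ι] {a : ι → ℕ} (ha : ∀ i, 0 < a i)
    {c : ℝ} (hc : 0 < c) :
    c ^ Fintype.card ι * (∏ i, (a i : ℝ)) / (Fintype.card ι)! ≤
      Nat.card (latticePointsBelow a c) := by
  let e := (Fintype.equivFin ι).symm
  have h := le_card_latticePointsBelow_fin (a := a ∘ e) (fun _ => ha _) hc
  simp only [comp_apply, e.prod_comp fun i => (a i : ℝ)] at h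
  exact h.trans (Nat.cast_le.2 (card_latticePointsBelow_comp_le e.injective ha c))

theorem Fin.card_filter_le_val (r s : ℕ) : #{i : Fin r | s ≤ (i : ℕ)} = r - s := by
  have := card_filter_add_card_filter_not (s := univ) fun i : Fin r => (i : ℕ) < s
  simp only [not_lt, card_univ, Fintype.card_fin, Fin.card_filter_val_lt] at this
  omega

theorem stmt1_general (r s : ℕ) (a : Fin r → ℕ) (ha : ∀ i, 0 < a i)
    (h : ∑ i ∈ Finset.univ.filter (fun i : Fin r => s ≤ (i : ℕ)), ((a i : ℝ))⁻¹ ≤ 1) :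
    (1 - ∑ i ∈ Finset.univ.filter (fun i : Fin r => s ≤ (i : ℕ)), ((a i : ℝ))⁻¹) ^ (r - s) *
        (∏ i ∈ Finset.univ.filter (fun i : Fin r => s ≤ (i : ℕ)), (a i : ℝ)) /
        (Nat.factorial (r - s) : ℝ) ≤
      (Nat.card {x : Fin r → ℕ | ∑ i, (x i : ℝ) / (a i : ℝ) < 1} : ℝ) := by
  set S := univ.filter fun i : Fin r => s ≤ (i : ℕ)
  have hcount := le_card_latticePointsBelow (a := fun i : S => a i) (fun i => ha i) one_pos
  rw [Fintype.card_coe, Fin.card_filter_le_val, one_pow, one_mul,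
    prod_coe_sort S fun i => (a i : ℝ)] at hcount
  calc _ ≤ (∏ i ∈ S, (a i : ℝ)) / (r - s).factorial := by
        gcongr ?_ / _
        refine mul_le_of_le_one_left (by positivity) (pow_le_one₀ (sub_nonneg.2 h) ?_)
        exact sub_le_self _ (by positivity)
    _ ≤ Nat.card (latticePointsBelow (fun i : S => a i) 1) := hcount
    _ ≤ _ := Nat.cast_le.2 (card_latticePointsBelow_comp_le Subtype.val_injective ha 1)

/-- lower bound on the number of non-negative integer solutions to
`∑ x_i / a_i < 1`, in terms of the coordinates with index `> s`. -/
theorem stmt1 (r s : ℕ) (hs : s < r) (a : Fin r → ℕ) (ha : ∀ i, 0 < a i)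
    (h : ∑ i ∈ Finset.univ.filter (fun i : Fin r => s ≤ (i : ℕ)), ((a i : ℝ))⁻¹ ≤ 1) :
    (1 - ∑ i ∈ Finset.univ.filter (fun i : Fin r => s ≤ (i : ℕ)), ((a i : ℝ))⁻¹) ^ (r - s) *
        (∏ i ∈ Finset.univ.filter (fun i : Fin r => s ≤ (i : ℕ)), (a i : ℝ)) /
        (Nat.factorial (r - s) : ℝ) ≤
      (Nat.card {x : Fin r → ℕ | ∑ i, (x i : ℝ) / (a i : ℝ) < 1} : ℝ) :=
  stmt1_general r s a ha h
end

section
/- In q-pebbling on a finite connected graph G with target vertex v, if a configuration D satisfies sum_w D(w)/q^{dist(w,v)} > sum_{w ≠ v} (q-1)/q^{dist(w,v)}, then D is v-solvable. -/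
/-!
The weight `∑_w D(w) / q^{dist(w,v)}` is invariant under a pebbling move from a vertex `u ≠ v`
to a neighbour one step closer to `v`, while each move lowers the number of pebbles by `q - 1`.
A configuration without a pebble on `v` on which no move is possible has weight at most
`∑_{w ≠ v} (q-1)/q^{dist(w,v)}`. So from any configuration above this threshold we keep moving
pebbles towards `v`; this stays above the threshold and terminates, necessarily on a configuration
with a pebble on `v`.
-/

/-- A `q`-pebbling move: remove `q` pebbles from a vertex `u` (which has at least `q`
pebbles) and add one pebble to a neighbour `u'`. -/
def PebStep {V : Type*} [DecidableEq V] (q : ℕ) (G : SimpleGraph V) (D D' : V → ℕ) : Prop :=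
  ∃ u u', G.Adj u u' ∧ q ≤ D u ∧
    D' = fun w => if w = u then D u - q else if w = u' then D u' + 1 else D w

/-- A configuration `D` is `v`-solvable if a finite sequence of `q`-pebbling moves
places a pebble on `v`. -/
def Solvable {V : Type*} [DecidableEq V] (q : ℕ) (G : SimpleGraph V) (D : V → ℕ) (v : V) : Prop :=
  ∃ D', Relation.ReflTransGen (PebStep q G) D D' ∧ 1 ≤ D' v

namespace SimpleGraph

variable {V : Type*} {G : SimpleGraph V}

lemma Reachable.exists_adj_dist_eq_add_one {u v : V} (h : G.Reachable u v) (hne : u ≠ v) :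
    ∃ u', G.Adj u u' ∧ G.dist u v = G.dist u' v + 1 := by
  obtain ⟨p, hp⟩ := h.exists_walk_length_eq_dist
  cases p with
  | nil => exact absurd rfl hne
  | @cons _ u' _ hadj p' =>
    refine ⟨u', hadj, le_antisymm ?_ ?_⟩
    · obtain ⟨r, hr⟩ := (Walk.reachable p').exists_walk_length_eq_dist
      simpa [hr] using dist_le (Walk.cons hadj r)
    · simpa [← hp] using dist_le p'

end SimpleGraph

namespace Pebbling

open Finset

variable {V : Type*} [DecidableEq V] {q : ℕ} {D : V → ℕ} {u u' : V}

def pebbleMove (q : ℕ) (D : V → ℕ) (u u' : V) : V → ℕ :=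
  fun w => if w = u then D u - q else if w = u' then D u' + 1 else D w

noncomputable def pebblingWeight [Fintype V] (q : ℕ) (G : SimpleGraph V) (v : V) (D : V → ℕ) :
    ℝ :=
  ∑ w, (D w : ℝ) / (q : ℝ) ^ G.dist w v

lemma cast_pebbleMove (hu : q ≤ D u) (huu' : u ≠ u') (w : V) :
    (pebbleMove q D u u' w : ℝ) =
      D w - q * (if w = u then 1 else 0) + (if w = u' then 1 else 0) := by
  unfold pebbleMove
  by_cases hwu : w = u
  · subst hwu
    simp [huu', Nat.cast_sub hu]
  · by_cases hwu' : w = u'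
    · subst hwu'
      simp [hwu]
    · simp [hwu, hwu']

lemma sum_pebbleMove_div [Fintype V] (hu : q ≤ D u) (huu' : u ≠ u') (c : V → ℝ) :
    ∑ w, (pebbleMove q D u u' w : ℝ) / c w = ∑ w, (D w : ℝ) / c w - q / c u + 1 / c u' := by
  simp only [cast_pebbleMove hu huu', add_div, sub_div, sum_add_distrib, sum_sub_distrib,
    mul_ite, mul_one, mul_zero, ite_div, zero_div, sum_ite_eq', mem_univ, if_true]

lemma sum_pebbleMove_add [Fintype V] (hu : q ≤ D u) (huu' : u ≠ u') :
    ∑ w, pebbleMove q D u u' w + q = ∑ w, D w + 1 := by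
  have h := sum_pebbleMove_div hu huu' (fun _ => 1)
  simp only [div_one] at h
  exact_mod_cast (by linarith : (∑ w, (pebbleMove q D u u' w : ℝ)) + q = ∑ w, (D w : ℝ) + 1)

variable [Fintype V] {G : SimpleGraph V} {v : V}

lemma pebblingWeight_pebbleMove (hq : q ≠ 0) (hu : q ≤ D u) (huu' : u ≠ u')
    (hdist : G.dist u v = G.dist u' v + 1) :
    pebblingWeight q G v (pebbleMove q D u u') = pebblingWeight q G v D := by
  have hq' : (q : ℝ) ≠ 0 := by exact_mod_cast hq
  unfold pebblingWeight
  rw [sum_pebbleMove_div hu huu', hdist, pow_succ, div_mul_cancel_right₀ hq', one_div,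
    sub_add_cancel]

lemma pebblingWeight_le_of_lt (hD : ∀ w, D w < q) (hv : D v = 0) :
    pebblingWeight q G v D ≤ ∑ w ∈ univ.filter (· ≠ v), ((q : ℝ) - 1) / (q : ℝ) ^ G.dist w v := by
  rw [pebblingWeight, ← sum_filter_of_ne (p := (· ≠ v)) (by rintro w - hw rfl; simp [hv] at hw)]
  refine sum_le_sum fun w _ => div_le_div_of_nonneg_right ?_ (by positivity)
  have : (D w : ℝ) + 1 ≤ q := by exact_mod_cast hD w
  linarith

theorem solvable_of_lt_pebblingWeight (hG : G.Preconnected) (hq : 2 ≤ q)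
    (h : ∑ w ∈ univ.filter (· ≠ v), ((q : ℝ) - 1) / (q : ℝ) ^ G.dist w v
      < pebblingWeight q G v D) :
    Solvable q G D v := by
  induction hN : ∑ w, D w using Nat.strong_induction_on generalizing D with
  | _ N ih =>
  by_cases hv : 1 ≤ D v
  · exact ⟨D, .refl, hv⟩
  obtain ⟨u, hu⟩ : ∃ u, q ≤ D u := by
    by_contra! hlt
    exact (pebblingWeight_le_of_lt hlt (by omega)).not_gt h
  have huv : u ≠ v := by rintro rfl; omega
  obtain ⟨u', hadj, hdist⟩ := (hG u v).exists_adj_dist_eq_add_one huv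
  have hcount := sum_pebbleMove_add hu hadj.ne
  have hweight := pebblingWeight_pebbleMove (by omega) hu hadj.ne hdist
  obtain ⟨E, hE, hEv⟩ := ih _ (by omega) (hweight ▸ h) rfl
  exact ⟨E, .head ⟨u, u', hadj, hu, rfl⟩ hE, hEv⟩

end Pebbling

/-- if `∑_w D(w)/q^{dist(w,v)} > ∑_{w ≠ v} (q-1)/q^{dist(w,v)}` then `D`
is `v`-solvable. -/
theorem stmt3 {V : Type*} [Fintype V] [DecidableEq V] (G : SimpleGraph V) (hG : G.Connected)
    (q : ℕ) (hq : 2 ≤ q) (D : V → ℕ) (v : V)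
    (h : ∑ w ∈ Finset.univ.filter (fun w => w ≠ v), ((q : ℝ) - 1) / (q : ℝ) ^ (G.dist w v)
          < ∑ w, (D w : ℝ) / (q : ℝ) ^ (G.dist w v)) :
    Solvable q G D v :=
  Pebbling.solvable_of_lt_pebblingWeight hG.preconnected hq h
end

section
/- Consider q-pebbling (with vector q = (q_1,...,q_d), each q_i ≥ 2) on the d-dimensional grid [n_1] × ... × [n_d], where a move in coordinate i removes q_i pebbles from a vertex and places one on a vertex differing by ±1 in coordinate i. If a configuration D satisfies sum_w D(w)/wq(w,v) > (max_i q_i - 1) * prod_i (q_i+1)/(q_i-1), where wq(w,v) = prod_i q_i^{|w_i - v_i|}, then D is v-solvable. -/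
/-- The pebbling distance `wq(w,v) = ∏ i q_i^{|w_i - v_i|}` on the grid. -/
def wq {d : ℕ} {n : Fin d → ℕ} (q : Fin d → ℕ) (w v : ∀ i, Fin (n i)) : ℝ :=
  ∏ i, (q i : ℝ) ^ (((w i : ℤ) - (v i : ℤ)).natAbs)

/-- A vector `q`-pebbling move on the grid `[n_1] × ⋯ × [n_d]`: in some coordinate `i`,
remove `q i` pebbles from a vertex `u` and place one pebble on a vertex `u'` adjacent
to `u` in coordinate `i`. -/
def GridStep {d : ℕ} (n q : Fin d → ℕ) (D D' : (∀ i, Fin (n i)) → ℕ) : Prop :=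
  ∃ (i : Fin d) (u u' : ∀ i, Fin (n i)), (∀ j, j ≠ i → u j = u' j) ∧
    ((u i : ℤ) - (u' i : ℤ)).natAbs = 1 ∧ q i ≤ D u ∧
    D' = fun w => if w = u then D u - q i else if w = u' then D u' + 1 else D w

/-- `v`-solvability for vector `q`-pebbling on the grid. -/
def GridSolvable {d : ℕ} (n q : Fin d → ℕ) (D : (∀ i, Fin (n i)) → ℕ)
    (v : ∀ i, Fin (n i)) : Prop :=
  ∃ D', Relation.ReflTransGen (GridStep n q) D D' ∧ 1 ≤ D' v

/-! The weight `∑ w, D w / wq w v` is invariant under a move towards `v`, while each move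
loses `q i - 1 ≥ 1` pebbles. So keep moving pebbles towards `v` as long as some vertex `w`
holds at least `q i` pebbles for a coordinate `i` in which it differs from `v`. If this stops
without reaching `v`, every vertex holds at most `max q - 1` pebbles, and the weight is at most
`(max q - 1) ∑ w, 1 / wq w v`; this sum factors over the coordinates into sums of two-sided
geometric series, each bounded by `(q i + 1) / (q i - 1)`. -/

lemma hasSum_pow_natAbs {r : ℝ} (hr₀ : 0 ≤ r) (hr₁ : r < 1) :
    HasSum (fun k : ℤ => r ^ k.natAbs) ((1 + r) / (1 - r)) := by
  have hgeom := hasSum_geometric_of_lt_one hr₀ hr₁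
  have hneg : HasSum (fun n : ℕ => r ^ (-((n : ℤ) + 1)).natAbs) (r * (1 - r)⁻¹) := by
    refine (hgeom.mul_left r).congr_fun fun n => ?_
    rw [← pow_succ']
    congr 1
  convert HasSum.of_nat_of_neg_add_one (f := fun k : ℤ => r ^ k.natAbs) hgeom hneg using 1
  field_simp [(sub_pos.2 hr₁).ne']

lemma sum_pow_natAbs_le {α : Type*} [Fintype α] {e : α → ℤ} (he : Function.Injective e)
    {r : ℝ} (hr₀ : 0 ≤ r) (hr₁ : r < 1) :
    ∑ x, r ^ (e x).natAbs ≤ (1 + r) / (1 - r) := by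
  have h := hasSum_pow_natAbs hr₀ hr₁
  rw [← tsum_fintype (L := .unconditional _), ← h.tsum_eq]
  exact tsum_comp_le_tsum_of_inj h.summable (fun _ => pow_nonneg hr₀ _) he

lemma wq_pos {d : ℕ} {n : Fin d → ℕ} {q : Fin d → ℕ} (hq : ∀ i, 0 < q i)
    (w v : ∀ i, Fin (n i)) : 0 < wq q w v :=
  Finset.prod_pos fun i _ => pow_pos (Nat.cast_pos.2 (hq i)) _

lemma sum_inv_wq_le {d : ℕ} {n : Fin d → ℕ} {q : Fin d → ℕ} (hq : ∀ i, 2 ≤ q i)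
    (v : ∀ i, Fin (n i)) :
    ∑ w, (wq q w v)⁻¹ ≤ ∏ i, ((q i : ℝ) + 1) / ((q i : ℝ) - 1) := by
  simp only [wq, ← Finset.prod_inv_distrib, ← inv_pow]
  rw [← Fintype.prod_sum (fun i (x : Fin (n i)) => ((q i : ℝ)⁻¹) ^ ((x : ℤ) - v i).natAbs)]
  refine Finset.prod_le_prod (fun i _ => by positivity) fun i _ => ?_
  have hq₁ : (1 : ℝ) < q i := by exact_mod_cast hq i
  have he : Function.Injective fun x : Fin (n i) => (x : ℤ) - v i := fun x y hxy => by
    simpa [Fin.ext_iff] using hxy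
  calc _ ≤ (1 + (q i : ℝ)⁻¹) / (1 - (q i : ℝ)⁻¹) :=
        sum_pow_natAbs_le he (by positivity) (inv_lt_one_of_one_lt₀ hq₁)
    _ = ((q i : ℝ) + 1) / ((q i : ℝ) - 1) := by
        field_simp [(sub_pos.2 hq₁).ne']

lemma Fin.exists_natAbs_sub_eq_one_closer {m : ℕ} {a b : Fin m} (hab : a ≠ b) :
    ∃ c : Fin m, ((a : ℤ) - c).natAbs = 1 ∧ ((a : ℤ) - b).natAbs = ((c : ℤ) - b).natAbs + 1 := by
  rcases Fin.lt_or_lt_of_ne hab with h | h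
  · exact ⟨⟨a + 1, by omega⟩, by simp, by simp; omega⟩
  · exact ⟨⟨a - 1, by omega⟩, by simp; omega, by simp; omega⟩

lemma wq_eq_mul_wq {d : ℕ} {n : Fin d → ℕ} (q : Fin d → ℕ) {u u' v : ∀ i, Fin (n i)} {i : Fin d}
    (hu : ∀ j, j ≠ i → u j = u' j)
    (hi : ((u i : ℤ) - v i).natAbs = ((u' i : ℤ) - v i).natAbs + 1) :
    wq q u v = q i * wq q u' v := by
  have hrest : ∀ j ∈ ({i}ᶜ : Finset (Fin d)),
      (q j : ℝ) ^ ((u j : ℤ) - v j).natAbs = (q j : ℝ) ^ ((u' j : ℤ) - v j).natAbs := by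
    intro j hj
    rw [hu j (by simpa using hj)]
  rw [wq, wq, Fintype.prod_eq_mul_prod_compl i, Fintype.prod_eq_mul_prod_compl i, hi, pow_succ,
    Finset.prod_congr rfl hrest]
  ring

lemma exists_adjacent_closer {d : ℕ} {n : Fin d → ℕ} (q : Fin d → ℕ) {u v : ∀ i, Fin (n i)}
    {i : Fin d} (hi : u i ≠ v i) :
    ∃ u', (∀ j, j ≠ i → u j = u' j) ∧ ((u i : ℤ) - u' i).natAbs = 1 ∧
      wq q u v = q i * wq q u' v := by
  obtain ⟨c, hc, hcv⟩ := Fin.exists_natAbs_sub_eq_one_closer hi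
  have hu : ∀ j, j ≠ i → u j = Function.update u i c j := fun j hj =>
    (Function.update_of_ne hj c u).symm
  refine ⟨Function.update u i c, hu, by simpa using hc, wq_eq_mul_wq q hu ?_⟩
  simpa using hcv

lemma Fintype.sum_sub_sum_eq_of_eq_off_pair {α G : Type*} [Fintype α] [AddCommGroup G]
    {f g : α → G} {a b : α} (hab : a ≠ b) (h : ∀ x, x ≠ a → x ≠ b → f x = g x) :
    ∑ x, f x - ∑ x, g x = (f a - g a) + (f b - g b) := by
  rw [← Finset.sum_sub_distrib]
  exact Fintype.sum_eq_add a b hab fun x hx => sub_eq_zero.2 (h x hx.1 hx.2)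

section PebbleMove

variable {α : Type*} [Fintype α] [DecidableEq α]

def pebbleMove (D : α → ℕ) (k : ℕ) (u u' : α) : α → ℕ :=
  fun w => if w = u then D u - k else if w = u' then D u' + 1 else D w

variable {D : α → ℕ} {k : ℕ} {u u' w : α}

omit [Fintype α] in
lemma pebbleMove_self : pebbleMove D k u u' u = D u - k := by
  simp [pebbleMove]

omit [Fintype α] in
lemma pebbleMove_target (huu' : u ≠ u') : pebbleMove D k u u' u' = D u' + 1 := by
  simp [pebbleMove, huu'.symm]

omit [Fintype α] in
lemma pebbleMove_of_ne (hu : w ≠ u) (hu' : w ≠ u') : pebbleMove D k u u' w = D w := by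
  simp [pebbleMove, hu, hu']

lemma sum_pebbleMove_add (huu' : u ≠ u') (hk : k ≤ D u) :
    ∑ w, pebbleMove D k u u' w + k = ∑ w, D w + 1 := by
  have h := Fintype.sum_sub_sum_eq_of_eq_off_pair (G := ℤ) (f := fun w => pebbleMove D k u u' w)
    (g := fun w => D w) huu' fun w hu hu' => by rw [pebbleMove_of_ne hu hu']
  rw [pebbleMove_self, pebbleMove_target huu'] at h
  push_cast [hk] at h
  zify
  linarith

lemma sum_pebbleMove_div {K : Type*} [Field K] {c : α → K} (huu' : u ≠ u') (hk : k ≤ D u)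
    (hc : c u = k * c u') (hcu : c u ≠ 0) :
    ∑ w, (pebbleMove D k u u' w : K) / c w = ∑ w, (D w : K) / c w := by
  have hk0 : (k : K) ≠ 0 := left_ne_zero_of_mul (hc ▸ hcu)
  have hcu' : c u' ≠ 0 := right_ne_zero_of_mul (hc ▸ hcu)
  rw [← sub_eq_zero, Fintype.sum_sub_sum_eq_of_eq_off_pair huu' fun w hu hu' => by
    rw [pebbleMove_of_ne hu hu'], pebbleMove_self, pebbleMove_target huu', hc]
  push_cast [hk]
  field_simp
  ring

end PebbleMove

section Grid

variable {d : ℕ} {n q : Fin d → ℕ} {D : (∀ i, Fin (n i)) → ℕ} {v : ∀ i, Fin (n i)}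

lemma exists_gridStep_closer (hq : ∀ i, 2 ≤ q i) {u : ∀ i, Fin (n i)} {i : Fin d}
    (hi : u i ≠ v i) (hqu : q i ≤ D u) :
    ∃ D', GridStep n q D D' ∧ ∑ w, D' w < ∑ w, D w ∧
      ∑ w, (D' w : ℝ) / wq q w v = ∑ w, (D w : ℝ) / wq q w v := by
  obtain ⟨u', hu, hadj, hwq⟩ := exists_adjacent_closer q hi
  have huu' : u ≠ u' := fun h => by simp [h] at hadj
  refine ⟨pebbleMove D (q i) u u', ⟨i, u, u', hu, hadj, hqu, rfl⟩, ?_,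
    sum_pebbleMove_div huu' hqu hwq (wq_pos (fun j => two_pos.trans_le (hq j)) u v).ne'⟩
  have := sum_pebbleMove_add huu' hqu
  have := hq i
  omega

lemma lt_sup_of_forall_lt (hd : 0 < d) (hq : ∀ i, 0 < q i) (hv : D v = 0)
    (hD : ∀ u i, u i ≠ v i → D u < q i) (w : ∀ i, Fin (n i)) :
    D w < Finset.univ.sup q := by
  by_cases hwv : w = v
  · rw [hwv, hv]
    exact (hq ⟨0, hd⟩).trans_le (Finset.le_sup (Finset.mem_univ _))
  · obtain ⟨i, hi⟩ := Function.ne_iff.1 hwv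
    exact (hD w i hi).trans_le (Finset.le_sup (Finset.mem_univ i))

lemma sum_div_wq_le (hq : ∀ i, 2 ≤ q i) {c : ℕ} (hD : ∀ w, D w < c) :
    ∑ w, (D w : ℝ) / wq q w v ≤ ((c : ℝ) - 1) * ∏ i, ((q i : ℝ) + 1) / ((q i : ℝ) - 1) := by
  have hD' : ∀ w, (D w : ℝ) ≤ c - 1 := fun w =>
    le_sub_iff_add_le.2 (by exact_mod_cast hD w)
  calc ∑ w, (D w : ℝ) / wq q w v ≤ ∑ w, ((c : ℝ) - 1) * (wq q w v)⁻¹ :=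
        Finset.sum_le_sum fun w _ => div_eq_mul_inv (D w : ℝ) _ ▸ mul_le_mul_of_nonneg_right (hD' w)
          (inv_nonneg.2 (wq_pos (fun i => two_pos.trans_le (hq i)) w v).le)
    _ = ((c : ℝ) - 1) * ∑ w, (wq q w v)⁻¹ := by rw [Finset.mul_sum]
    _ ≤ ((c : ℝ) - 1) * ∏ i, ((q i : ℝ) + 1) / ((q i : ℝ) - 1) :=
        mul_le_mul_of_nonneg_left (sum_inv_wq_le hq v) ((Nat.cast_nonneg _).trans (hD' v))

end Grid

theorem stmt4_general {d : ℕ} (hd : 0 < d) (n q : Fin d → ℕ) (hq : ∀ i, 2 ≤ q i)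
    (D : (∀ i, Fin (n i)) → ℕ) (v : ∀ i, Fin (n i))
    (h : ((Finset.univ.sup q : ℕ) - 1 : ℝ) * ∏ i, ((q i : ℝ) + 1) / ((q i : ℝ) - 1)
          < ∑ w, (D w : ℝ) / wq q w v) :
    GridSolvable n q D v := by
  induction hN : ∑ w, D w using Nat.strong_induction_on generalizing D with
  | _ N ih =>
  by_cases hv : 1 ≤ D v
  · exact ⟨D, .refl, hv⟩
  by_cases hmove : ∃ u i, u i ≠ v i ∧ q i ≤ D u
  · obtain ⟨u, i, hi, hqu⟩ := hmove
    obtain ⟨D', hstep, hcount, hweight⟩ := exists_gridStep_closer hq hi hqu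
    obtain ⟨E, hE, hEv⟩ := ih _ (hN ▸ hcount) D' (hweight ▸ h) rfl
    exact ⟨E, .head hstep hE, hEv⟩
  · push Not at hmove
    have hlt := lt_sup_of_forall_lt hd (fun i => two_pos.trans_le (hq i)) (by omega) hmove
    exact absurd h (sum_div_wq_le hq hlt).not_gt

/-- the sufficient condition for solvability on grids. -/
theorem stmt4 {d : ℕ} (hd : 0 < d) (n q : Fin d → ℕ) (hq : ∀ i, 2 ≤ q i)
    (hn : ∀ i, 1 ≤ n i) (D : (∀ i, Fin (n i)) → ℕ) (v : ∀ i, Fin (n i))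
    (h : ((Finset.univ.sup q : ℕ) - 1 : ℝ) * ∏ i, ((q i : ℝ) + 1) / ((q i : ℝ) - 1)
          < ∑ w, (D w : ℝ) / wq q w v) :
    GridSolvable n q D v :=
  stmt4_general hd n q hq D v h
end

section
/- For q-pebbling on the path P_n with vertices 1,...,n (each move removes q ≥ 2 pebbles from a vertex and places one on an adjacent vertex), a configuration D is i-solvable if and only if sum_{j>i} D(j)/q^{j-i} ≥ 1, or sum_{j<i} D(j)/q^{i-j} ≥ 1, or D(i) ≥ 1. -/
/-!
Necessity: weigh a pebble at signed distance `k > 0` from `i` on a fixed side by `q^(-k)`, and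
pebbles elsewhere by `0`. A move that does not start at `i` costs `q` pebbles of weight `w` and
creates one of weight at most `q * w`, so neither side's total weight increases; and the first
pebble to reach `i` comes from a neighbour holding `q` pebbles, i.e. from a side of weight at
least `1`.

Sufficiency: along a ladder `p 0, p 1, …, p k` of adjacent vertices, `m` pebbles can be gathered
on `p 0` once `m ≤ ∑ D (p l) / q^l`: top up `p 0` by sending `m - D (p 0)` groups of `q` from
`p 1`, which the tail of the ladder can supply by induction.
-/

open Finset Relation

section Moves

variable {V : Type*} [DecidableEq V] {G : SimpleGraph V} {q : ℕ}

def movePebbles (q m : ℕ) (D : V → ℕ) (u u' w : V) : ℕ :=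
  if w = u then D u - m * q else if w = u' then D u' + m else D w

theorem pebStep_iff {D D' : V → ℕ} :
    PebStep q G D D' ↔ ∃ u u', G.Adj u u' ∧ q ≤ D u ∧ D' = movePebbles q 1 D u u' := by
  unfold PebStep movePebbles
  simp only [one_mul]

theorem movePebbles_zero (D : V → ℕ) (u u' : V) : movePebbles q 0 D u u' = D := by
  funext w
  unfold movePebbles
  split_ifs <;> simp_all

theorem reflTransGen_movePebbles {u u' : V} (h : G.Adj u u') {m : ℕ} {D : V → ℕ}
    (hm : m * q ≤ D u) : ReflTransGen (PebStep q G) D (movePebbles q m D u u') := by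
  induction m with
  | zero => rw [movePebbles_zero]
  | succ m ih =>
    rw [Nat.succ_mul] at hm
    refine (ih (by omega)).tail (pebStep_iff.2 ⟨u, u', h, ?_, ?_⟩)
    · simp only [movePebbles, if_true]
      omega
    · funext w
      simp only [movePebbles, if_neg h.ne.symm, add_mul, one_mul]
      split_ifs <;> omega

theorem sum_movePebbles_mul_le [Fintype V] (c : V → ℝ) {u u' : V} (huu' : u ≠ u') {m : ℕ}
    {D : V → ℕ} (hm : m * q ≤ D u) (hc : c u' ≤ q * c u) :
    ∑ j, (movePebbles q m D u u' j : ℝ) * c j ≤ ∑ j, (D j : ℝ) * c j := by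
  have hmove : ∀ j, (movePebbles q m D u u' j : ℝ) * c j =
      D j * c j - (if j = u then m * q * c u else 0) + (if j = u' then m * c u' else 0) := by
    intro j
    unfold movePebbles
    by_cases hu : j = u
    · subst hu
      simp only [if_true, if_neg huu']
      push_cast [hm]
      ring
    · by_cases hu' : j = u'
      · subst hu'
        simp only [if_neg hu, if_true]
        push_cast
        ring
      · simp only [if_neg hu, if_neg hu']
        ring
  simp only [hmove, sum_add_distrib, sum_sub_distrib, sum_ite_eq', mem_univ, if_true]
  nlinarith [(Nat.cast_nonneg m : (0:ℝ) ≤ m)]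

end Moves

section Ladder

variable {V : Type*} [DecidableEq V] {G : SimpleGraph V} {q : ℕ}

theorem exists_reflTransGen_of_ladder (hq : 0 < q) (k : ℕ) (p : ℕ → V)
    (hadj : ∀ l < k, G.Adj (p l) (p (l + 1))) (hinj : Set.InjOn p (Set.Iic k)) (D : V → ℕ)
    (m : ℕ) (hm : (m : ℝ) ≤ ∑ l ∈ range (k + 1), (D (p l) : ℝ) / (q : ℝ) ^ l) :
    ∃ D', ReflTransGen (PebStep q G) D D' ∧ m ≤ D' (p 0) ∧
      ∀ x, (∀ l ≤ k, p l ≠ x) → D' x = D x := by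
  induction k generalizing p D m with
  | zero => exact ⟨D, .refl, by simpa using hm, fun _ _ => rfl⟩
  | succ k ih =>
    by_cases hm₀ : m ≤ D (p 0)
    · exact ⟨D, .refl, hm₀, fun _ _ => rfl⟩
    obtain ⟨r, rfl⟩ : ∃ r, m = D (p 0) + r := ⟨m - D (p 0), by omega⟩
    have hq' : (0 : ℝ) < q := by exact_mod_cast hq
    have hr : ((r * q : ℕ) : ℝ) ≤ ∑ l ∈ range (k + 1), (D (p (l + 1)) : ℝ) / (q : ℝ) ^ l := by
      rw [sum_range_succ'] at hm
      simp only [pow_succ, ← div_div, ← sum_div, pow_zero, div_one] at hm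
      push_cast at hm ⊢
      rw [← le_div_iff₀ hq']
      linarith
    have hp₀ : ∀ l ≤ k, p (l + 1) ≠ p 0 := fun l hl h => by
      have := hinj (Set.mem_Iic.2 (Nat.succ_le_succ hl)) (Set.mem_Iic.2 (Nat.zero_le _)) h
      omega
    obtain ⟨D₁, hreach, hr₁, hD₁⟩ := ih (fun l => p (l + 1)) (fun l hl => hadj _ (by omega))
      (fun a ha b hb h => Nat.succ_injective (hinj (Nat.succ_le_succ ha) (Nat.succ_le_succ hb) h))
      D (r * q) hr
    have hD₁p₀ : D₁ (p 0) = D (p 0) := hD₁ _ hp₀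
    have hadj₀ : G.Adj (p 1) (p 0) := (hadj 0 (by omega)).symm
    refine ⟨_, hreach.trans (reflTransGen_movePebbles hadj₀ hr₁), ?_, fun x hx => ?_⟩
    · simp [movePebbles, hadj₀.ne.symm, hD₁p₀]
    · simp only [movePebbles, if_neg (hx 1 (by omega)).symm, if_neg (hx 0 (by omega)).symm]
      exact hD₁ x fun l hl => hx (l + 1) (by omega)

theorem solvable_of_one_le_sum_ladder (hq : 0 < q) (k : ℕ) (p : ℕ → V)
    (hadj : ∀ l < k, G.Adj (p l) (p (l + 1))) (hinj : Set.InjOn p (Set.Iic k)) (e : V → ℕ)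
    (he : ∀ l ≤ k, e (p l) = l) (s : Finset V) (hs : ∀ x ∈ s, ∃ l ≤ k, p l = x) (D : V → ℕ)
    (h : 1 ≤ ∑ x ∈ s, (D x : ℝ) / (q : ℝ) ^ e x) : Solvable q G D (p 0) := by
  have hle : ∑ x ∈ s, (D x : ℝ) / (q : ℝ) ^ e x ≤
      ∑ l ∈ range (k + 1), (D (p l) : ℝ) / (q : ℝ) ^ l := by
    calc ∑ x ∈ s, (D x : ℝ) / (q : ℝ) ^ e x
        ≤ ∑ x ∈ (range (k + 1)).image p, (D x : ℝ) / (q : ℝ) ^ e x :=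
          sum_le_sum_of_subset_of_nonneg (fun x hx => by
            obtain ⟨l, hl, rfl⟩ := hs x hx
            exact mem_image_of_mem p (mem_range.2 (by omega))) (fun _ _ _ => by positivity)
      _ = ∑ l ∈ range (k + 1), (D (p l) : ℝ) / (q : ℝ) ^ l := by
          rw [sum_image fun a ha b hb h =>
            hinj (Nat.lt_succ_iff.1 (mem_range.1 ha)) (Nat.lt_succ_iff.1 (mem_range.1 hb)) h]
          exact sum_congr rfl fun l hl => by rw [he l (Nat.lt_succ_iff.1 (mem_range.1 hl))]
  obtain ⟨D', hreach, hD', -⟩ :=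
    exists_reflTransGen_of_ladder hq k p hadj hinj D 1 (by exact_mod_cast h.trans hle)
  exact ⟨D', hreach, hD'⟩

end Ladder

noncomputable def sideWeight (q : ℕ) (k : ℤ) : ℝ :=
  if 0 < k then (q : ℝ) ^ (-k) else 0

theorem sideWeight_nonneg (q : ℕ) (k : ℤ) : 0 ≤ sideWeight q k := by
  unfold sideWeight
  split_ifs <;> positivity

theorem sideWeight_one (q : ℕ) : sideWeight q 1 = (q : ℝ)⁻¹ := by
  simp [sideWeight]

theorem sideWeight_le_mul {q : ℕ} (hq : 1 ≤ q) {k k' : ℤ} (hk : k ≠ 0) (hk' : |k' - k| ≤ 1) :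
    sideWeight q k' ≤ q * sideWeight q k := by
  have hq' : (1 : ℝ) ≤ q := by exact_mod_cast hq
  rw [abs_le] at hk'
  unfold sideWeight
  split_ifs with h' h
  · calc (q : ℝ) ^ (-k') ≤ (q : ℝ) ^ (1 + -k) := zpow_le_zpow_right₀ hq' (by omega)
      _ = q * (q : ℝ) ^ (-k) := by rw [zpow_add₀ (by positivity), zpow_one]
  · omega
  · positivity
  · rw [mul_zero]

section Potential

variable {V : Type*} [Fintype V] {q : ℕ}

noncomputable def sidePotential (q : ℕ) (d : V → ℤ) (D : V → ℕ) : ℝ :=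
  ∑ j, (D j : ℝ) * sideWeight q (d j)

theorem sidePotential_movePebbles_le [DecidableEq V] (hq : 1 ≤ q) (d : V → ℤ) {u u' : V}
    (huu' : u ≠ u') (hu : d u ≠ 0) (hd : |d u' - d u| ≤ 1) {D : V → ℕ} (hD : q ≤ D u) :
    sidePotential q d (movePebbles q 1 D u u') ≤ sidePotential q d D :=
  sum_movePebbles_mul_le _ huu' (by simpa using hD) (sideWeight_le_mul hq hu hd)

theorem one_le_sidePotential (hq : 0 < q) (d : V → ℤ) {u : V} (hu : d u = 1) {D : V → ℕ}
    (hD : q ≤ D u) : 1 ≤ sidePotential q d D := by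
  have hq' : (0 : ℝ) < q := by exact_mod_cast hq
  calc (1 : ℝ) ≤ D u * sideWeight q (d u) := by
        rw [hu, sideWeight_one, ← div_eq_mul_inv, le_div_iff₀ hq', one_mul]
        exact_mod_cast hD
    _ ≤ sidePotential q d D :=
        single_le_sum (fun j _ => mul_nonneg (Nat.cast_nonneg _) (sideWeight_nonneg q (d j)))
          (mem_univ u)

theorem sum_filter_div_pow_eq_sidePotential (d : V → ℤ) (e : V → ℕ) (p : V → Prop)
    [DecidablePred p] (hp : ∀ j, p j ↔ 0 < d j) (he : ∀ j, p j → d j = e j) (D : V → ℕ) :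
    ∑ j ∈ univ.filter p, (D j : ℝ) / (q : ℝ) ^ e j = sidePotential q d D := by
  rw [sum_filter, sidePotential]
  refine sum_congr rfl fun j _ => ?_
  by_cases hj : p j
  · rw [if_pos hj, sideWeight, if_pos ((hp j).1 hj), he j hj, zpow_neg, zpow_natCast,
      div_eq_mul_inv]
  · rw [if_neg hj, sideWeight, if_neg (mt (hp j).2 hj), mul_zero]

end Potential

section PathGraph

variable {n q : ℕ}

theorem abs_sub_le_one_of_pathGraph_adj {u u' : Fin n} (h : (SimpleGraph.pathGraph n).Adj u u') :
    |(u' : ℤ) - u| ≤ 1 := by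
  rw [SimpleGraph.pathGraph_adj] at h
  rw [abs_le]
  omega

theorem one_le_sidePotential_or_of_solvable_pathGraph (hq : 1 ≤ q) {D : Fin n → ℕ} {i : Fin n}
    (h : Solvable q (SimpleGraph.pathGraph n) D i) :
    1 ≤ sidePotential q (fun j : Fin n => (j : ℤ) - i) D ∨
      1 ≤ sidePotential q (fun j : Fin n => (i : ℤ) - j) D ∨ 1 ≤ D i := by
  obtain ⟨D', hreach, hD'⟩ := h
  refine ReflTransGen.head_induction_on hreach (.inr (.inr hD')) ?_
  rintro X _ hstep - hY
  obtain ⟨u, u', hadj, hXu, rfl⟩ := pebStep_iff.1 hstep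
  by_cases hu : u = i
  · exact .inr (.inr (hu ▸ hXu.trans' hq))
  have hu₀ : (u : ℕ) ≠ i := fun h => hu (Fin.ext h)
  have hlip := abs_sub_le_one_of_pathGraph_adj hadj
  have hright := sidePotential_movePebbles_le hq (fun j : Fin n => (j : ℤ) - i) hadj.ne (by omega)
    (by simpa using hlip) hXu
  have hleft := sidePotential_movePebbles_le hq (fun j : Fin n => (i : ℤ) - j) hadj.ne (by omega)
    (by rw [abs_sub_comm]; simpa using hlip) hXu
  rcases hY with hY | hY | hY
  · exact .inl (hY.trans hright)
  · exact .inr (.inl (hY.trans hleft))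
  by_cases hu' : u' = i
  · subst hu'
    rw [SimpleGraph.pathGraph_adj] at hadj
    rcases hadj with hadj | hadj
    · exact .inr (.inl (one_le_sidePotential hq _ (by omega) hXu))
    · exact .inl (one_le_sidePotential hq _ (by omega) hXu)
  · exact .inr (.inr (by simpa [movePebbles, Ne.symm hu, Ne.symm hu'] using hY))

theorem solvable_pathGraph_of_one_le_sum_gt (hq : 0 < q) (D : Fin n → ℕ) (i : Fin n)
    (h : 1 ≤ ∑ j ∈ univ.filter (fun j : Fin n => i < j), (D j : ℝ) / (q : ℝ) ^ ((j : ℕ) - i)) :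
    Solvable q (SimpleGraph.pathGraph n) D i := by
  have hsolv := solvable_of_one_le_sum_ladder (G := SimpleGraph.pathGraph n) hq (n - 1 - i)
    (fun l => ⟨min (i + l) (n - 1), by omega⟩)
    (fun l hl => by rw [SimpleGraph.pathGraph_adj]; dsimp only; omega)
    (fun a ha b hb hab => by simp only [Set.mem_Iic, Fin.ext_iff] at ha hb hab; omega)
    (fun j : Fin n => (j : ℕ) - i) (fun l hl => by dsimp only; omega) _
    (fun j hj => by
      rw [mem_filter, Fin.lt_def] at hj
      exact ⟨j - i, by omega, by ext; simp only; omega⟩) D h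
  convert hsolv using 1
  ext
  simp only
  omega

theorem solvable_pathGraph_of_one_le_sum_lt (hq : 0 < q) (D : Fin n → ℕ) (i : Fin n)
    (h : 1 ≤ ∑ j ∈ univ.filter (fun j : Fin n => j < i), (D j : ℝ) / (q : ℝ) ^ ((i : ℕ) - j)) :
    Solvable q (SimpleGraph.pathGraph n) D i := by
  have hsolv := solvable_of_one_le_sum_ladder (G := SimpleGraph.pathGraph n) hq i
    (fun l => ⟨i - l, by omega⟩)
    (fun l hl => by rw [SimpleGraph.pathGraph_adj]; dsimp only; omega)
    (fun a ha b hb hab => by simp only [Set.mem_Iic, Fin.ext_iff] at ha hb hab; omega)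
    (fun j : Fin n => (i : ℕ) - j) (fun l hl => by dsimp only; omega) _
    (fun j hj => by
      rw [mem_filter, Fin.lt_def] at hj
      exact ⟨i - j, by omega, by ext; simp only; omega⟩) D h
  simpa using hsolv

end PathGraph

/-- on the path with vertices `0,…,n-1`, a configuration is `i`-solvable
iff enough weighted pebbles lie on one side of `i`, or `i` already has a pebble. -/
theorem stmt6 (n : ℕ) (q : ℕ) (hq : 2 ≤ q) (D : Fin n → ℕ) (i : Fin n) :
    Solvable q (SimpleGraph.pathGraph n) D i ↔
      (1 ≤ ∑ j ∈ Finset.univ.filter (fun j : Fin n => i < j),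
            (D j : ℝ) / (q : ℝ) ^ ((j : ℕ) - (i : ℕ))) ∨
      (1 ≤ ∑ j ∈ Finset.univ.filter (fun j : Fin n => j < i),
            (D j : ℝ) / (q : ℝ) ^ ((i : ℕ) - (j : ℕ))) ∨
      1 ≤ D i := by
  refine ⟨fun h => ?_, ?_⟩
  · rw [sum_filter_div_pow_eq_sidePotential (fun j : Fin n => (j : ℤ) - i) _ _
        (fun j => by rw [Fin.lt_def]; omega) (fun j hj => by rw [Fin.lt_def] at hj; omega),
      sum_filter_div_pow_eq_sidePotential (fun j : Fin n => (i : ℤ) - j) _ _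
        (fun j => by rw [Fin.lt_def]; omega) (fun j hj => by rw [Fin.lt_def] at hj; omega)]
    exact one_le_sidePotential_or_of_solvable_pathGraph (by omega) h
  · rintro (h | h | h)
    · exact solvable_pathGraph_of_one_le_sum_gt (by omega) D i h
    · exact solvable_pathGraph_of_one_le_sum_lt (by omega) D i h
    · exact ⟨D, .refl, h⟩
end

section
/- For 2-pebbling on the n-dimensional hypercube Q_n, the pebbling number is 2^n: every configuration of 2^n pebbles on the vertices of Q_n is solvable, and there exists a configuration of 2^n - 1 pebbles that is not solvable. -/
/-- The hypercube graph `Q_n` on vertex set `{0,1}^n`: two vertices are adjacent iff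
they differ in exactly one coordinate. -/
def cubeGraph (n : ℕ) : SimpleGraph (Fin n → Bool) :=
  SimpleGraph.fromRel (fun x y => (Finset.univ.filter fun i => x i ≠ y i).card = 1)

/-!
The upper bound follows Chung. Identify `Q_{n+1}` with `K₂ □ Q_n` and prove, by induction on `n`,
that `2 ^ n` pebbles on `Q_n` can put one pebble on any vertex and that a configuration with
`∑ ⌈D x / 2⌉ > 2 ^ n` can put two. To reach a vertex `(c, w)` of `K₂ □ Q_n`, either the opposite
copy of `Q_n` can put two pebbles on `(!c, w)` on its own, or one moves pairs of pebbles from the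
opposite copy across the perfect matching until the copy of `(c, w)` holds `2 ^ n` pebbles. For two
pebbles one moves exactly that many pairs, which leaves the opposite copy rich enough to deliver a
second pebble.

For the lower bound, the weight `∑ D x * 2 ^ (n - d(x, v))` never increases under a move; it is
`2 ^ n - 1` for `2 ^ n - 1` pebbles on the antipode of `v`, and at least `2 ^ n` once `v` holds a
pebble.
-/

open Function SimpleGraph

section Extend

variable {V W : Type*}

theorem extend_add_zero (φ : V → W) (f g : V → ℕ) :
    extend φ (f + g) 0 = extend φ f 0 + extend φ g 0 := by
  simpa using extend_add φ f g 0 0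

theorem extend_single_zero [DecidableEq V] [DecidableEq W] {φ : V → W} (hφ : Injective φ)
    (x : V) (m : ℕ) : extend φ (Pi.single x m) 0 = Pi.single (φ x) m := by
  funext y
  by_cases hy : ∃ x', φ x' = y
  · obtain ⟨x', rfl⟩ := hy
    simp [hφ.extend_apply, Pi.single_apply, hφ.eq_iff]
  · have hx : y ≠ φ x := fun h => hy ⟨x, h.symm⟩
    simp [extend_apply' _ _ _ hy, hx]

end Extend

section Moves

variable {V W : Type*} [DecidableEq V] [DecidableEq W] {q : ℕ} {G : SimpleGraph V}
  {H : SimpleGraph W}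

abbrev Moves (q : ℕ) (G : SimpleGraph V) : (V → ℕ) → (V → ℕ) → Prop :=
  Relation.ReflTransGen (PebStep q G)

def Reach (q : ℕ) (G : SimpleGraph V) (k : ℕ) (D : V → ℕ) (v : V) : Prop :=
  ∃ D', Moves q G D D' ∧ k ≤ D' v

theorem solvable_iff_reach {D : V → ℕ} {v : V} : Solvable q G D v ↔ Reach q G 1 D v := Iff.rfl

theorem PebStep.add_right {D D' : V → ℕ} (h : PebStep q G D D') (E : V → ℕ) :
    PebStep q G (D + E) (D' + E) := by
  obtain ⟨u, u', hadj, hu, rfl⟩ := h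
  refine ⟨u, u', hadj, hu.trans (by simp), funext fun w => ?_⟩
  by_cases hwu : w = u <;> by_cases hwu' : w = u' <;> simp_all [hadj.ne] <;> omega

theorem Moves.add {D₁ D₁' D₂ D₂' : V → ℕ} (h₁ : Moves q G D₁ D₁') (h₂ : Moves q G D₂ D₂') :
    Moves q G (D₁ + D₂) (D₁' + D₂') :=
  (h₁.lift (· + D₂) fun _ _ h => h.add_right D₂).trans <| by
    simpa only [add_comm D₁'] using h₂.lift (· + D₁') fun _ _ h => h.add_right D₁'

theorem Reach.add {D₁ D₂ : V → ℕ} {k₁ k₂ : ℕ} {v : V} (h₁ : Reach q G k₁ D₁ v)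
    (h₂ : Reach q G k₂ D₂ v) : Reach q G (k₁ + k₂) (D₁ + D₂) v := by
  obtain ⟨E₁, hm₁, hk₁⟩ := h₁
  obtain ⟨E₂, hm₂, hk₂⟩ := h₂
  exact ⟨E₁ + E₂, hm₁.add hm₂, Nat.add_le_add hk₁ hk₂⟩

theorem Reach.mono {D E : V → ℕ} {k : ℕ} {v : V} (h : Reach q G k D v) (hDE : D ≤ E) :
    Reach q G k E v := by
  simpa [add_tsub_cancel_of_le hDE] using h.add (k₂ := 0) ⟨E - D, .refl, Nat.zero_le _⟩

theorem Reach.of_moves {D D' : V → ℕ} {k : ℕ} {v : V} (hm : Moves q G D D')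
    (h : Reach q G k D' v) : Reach q G k D v := by
  obtain ⟨E, hm', hk⟩ := h
  exact ⟨E, hm.trans hm', hk⟩

theorem Reach.of_adj {D : V → ℕ} {u v : V} (hadj : G.Adj u v) (h : Reach q G q D u) :
    Reach q G 1 D v := by
  obtain ⟨E, hm, hk⟩ := h
  exact ⟨_, hm.tail ⟨u, v, hadj, hk, rfl⟩, by simp [hadj.ne']⟩

theorem moves_single_mul {u u' : V} (hadj : G.Adj u u') (m : ℕ) :
    Moves q G (Pi.single u (q * m)) (Pi.single u' m) := by
  induction m with
  | zero => simp only [mul_zero, Pi.single_zero]; exact .refl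
  | succ m ih =>
    have hstep : PebStep q G (Pi.single u q) (Pi.single u' 1) :=
      ⟨u, u', hadj, by simp, funext fun w => by
        by_cases hwu : w = u <;> by_cases hwu' : w = u' <;> simp_all [hadj.ne]⟩
    simpa only [mul_add, mul_one, Pi.single_add] using ih.add (.single hstep)

theorem PebStep.map (φ : G ↪g H) {D D' : V → ℕ} (h : PebStep q G D D') :
    PebStep q H (extend φ D 0) (extend φ D' 0) := by
  obtain ⟨u, u', hadj, hu, rfl⟩ := h
  refine ⟨φ u, φ u', φ.map_adj_iff.mpr hadj, by rwa [φ.injective.extend_apply], funext fun y => ?_⟩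
  by_cases hy : ∃ x, φ x = y
  · obtain ⟨x, rfl⟩ := hy
    simp [φ.injective.extend_apply, φ.injective.eq_iff]
  · have hu : y ≠ φ u := fun h => hy ⟨u, h.symm⟩
    have hu' : y ≠ φ u' := fun h => hy ⟨u', h.symm⟩
    simp [extend_apply' _ _ _ hy, hu, hu']

theorem Moves.map (φ : G ↪g H) {D D' : V → ℕ} (h : Moves q G D D') :
    Moves q H (extend φ D 0) (extend φ D' 0) :=
  h.lift (fun E : V → ℕ => extend φ E 0) fun _ _ => PebStep.map φ

theorem Reach.map (φ : G ↪g H) {D : V → ℕ} {k : ℕ} {v : V} (h : Reach q G k D v) :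
    Reach q H k (extend φ D 0) (φ v) := by
  obtain ⟨E, hm, hk⟩ := h
  exact ⟨_, hm.map φ, by rwa [φ.injective.extend_apply]⟩

theorem Reach.of_iso (e : G ≃g H) {D : W → ℕ} {k : ℕ} {v : W}
    (h : Reach q G k (D ∘ e) (e.symm v)) : Reach q H k D v := by
  have hD : extend e (D ∘ e) 0 = D := funext fun y => by
    obtain ⟨x, rfl⟩ := e.surjective y
    exact e.injective.extend_apply _ _ x
  simpa [hD] using h.map e.toEmbedding

theorem moves_extend_nsmul [Finite V] (φ ψ : G ↪g H) (hadj : ∀ x, H.Adj (φ x) (ψ x))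
    (f : V → ℕ) : Moves q H (extend φ (q • f) 0) (extend ψ f 0) := by
  induction f using Pi.single_induction with
  | zero => simp only [smul_zero, extend_zero]; exact .refl
  | add f g hf hg => simpa only [smul_add, extend_add_zero] using hf.add hg
  | single x m =>
    simpa [extend_single_zero φ.injective, extend_single_zero ψ.injective, ← Pi.single_smul]
      using moves_single_mul (hadj x) m

end Moves

section Weight

variable {V : Type*} [DecidableEq V] [Fintype V] {q : ℕ} {G : SimpleGraph V} {w : V → ℕ}

theorem PebStep.sum_mul_le (hw : ∀ u u', G.Adj u u' → w u' ≤ q * w u)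
    {D D' : V → ℕ} (h : PebStep q G D D') : ∑ x, D' x * w x ≤ ∑ x, D x * w x := by
  obtain ⟨u, u', hadj, hu, rfl⟩ := h
  have hbalance : ∀ x, (if x = u then D u - q else if x = u' then D u' + 1 else D x) * w x +
      (if x = u then q * w u else 0) = D x * w x + (if x = u' then w u' else 0) := by
    intro x
    by_cases hxu : x = u
    · subst hxu
      simp only [if_pos, if_neg hadj.ne]
      rw [← add_mul]; congr 1; omega
    · by_cases hxu' : x = u' <;> simp [hxu, hxu', hadj.ne', add_mul]
  have hsum := Finset.sum_congr rfl fun x (_ : x ∈ Finset.univ) => hbalance x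
  simp only [Finset.sum_add_distrib, Finset.sum_ite_eq', Finset.mem_univ, if_true] at hsum
  have := hw u u' hadj
  beta_reduce
  omega

theorem Moves.sum_mul_le (hw : ∀ u u', G.Adj u u' → w u' ≤ q * w u)
    {D D' : V → ℕ} (h : Moves q G D D') : ∑ x, D' x * w x ≤ ∑ x, D x * w x := by
  induction h with
  | refl => exact le_rfl
  | tail _ hstep ih => exact (hstep.sum_mul_le hw).trans ih

theorem not_solvable_of_sum_mul_lt (hw : ∀ u u', G.Adj u u' → w u' ≤ q * w u)
    {D : V → ℕ} {v : V} (h : ∑ x, D x * w x < w v) : ¬ Solvable q G D v := by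
  rintro ⟨D', hm, hv⟩
  have hle : D' v * w v ≤ ∑ x, D' x * w x :=
    Finset.single_le_sum (f := fun x => D' x * w x) (fun _ _ => Nat.zero_le _) (Finset.mem_univ v)
  have := Moves.sum_mul_le hw hm
  have : w v ≤ D' v * w v := Nat.le_mul_of_pos_left _ hv
  omega

end Weight

section Arithmetic

variable {ι : Type*}

theorem Finset.exists_le_sum_eq [DecidableEq ι] (s : Finset ι) (g : ι → ℕ) {t : ℕ}
    (ht : t ≤ ∑ i ∈ s, g i) : ∃ f ≤ g, ∑ i ∈ s, f i = t := by
  induction s using Finset.induction_on generalizing t with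
  | empty => exact ⟨0, fun _ => Nat.zero_le _, by simp only [Finset.sum_empty] at ht ⊢; omega⟩
  | insert a s has ih =>
    rw [Finset.sum_insert has] at ht
    obtain ⟨f, hfg, hf⟩ := ih (t := t - min t (g a)) (by omega)
    refine ⟨update f a (min t (g a)), fun i => ?_, ?_⟩
    · rcases eq_or_ne i a with rfl | hi
      · simp
      · simpa [hi] using hfg i
    · rw [Finset.sum_insert has, update_self, Finset.sum_update_of_notMem has, hf]
      omega

variable [Fintype ι]

theorem sum_div_two_add_sum_add_one_div_two (D : ι → ℕ) :
    ∑ i, D i / 2 + ∑ i, (D i + 1) / 2 = ∑ i, D i := by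
  rw [← Finset.sum_add_distrib]
  exact Finset.sum_congr rfl fun i _ => by omega

theorem sum_add_one_div_two_le_sum (D : ι → ℕ) : ∑ i, (D i + 1) / 2 ≤ ∑ i, D i :=
  Finset.sum_le_sum fun i _ => by omega

theorem sum_add_one_div_two_le_sum_div_two_add_card (D : ι → ℕ) :
    ∑ i, (D i + 1) / 2 ≤ ∑ i, D i / 2 + Fintype.card ι := by
  calc ∑ i, (D i + 1) / 2 ≤ ∑ i, (D i / 2 + 1) := Finset.sum_le_sum fun i _ => by omega
    _ = ∑ i, D i / 2 + Fintype.card ι := by simp [Finset.sum_add_distrib]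

theorem sum_tsub_two_nsmul_add_one_div_two {B f : ι → ℕ} (hf : 2 • f ≤ B) :
    ∑ i, ((B - 2 • f) i + 1) / 2 + ∑ i, f i = ∑ i, (B i + 1) / 2 := by
  rw [← Finset.sum_add_distrib]
  refine Finset.sum_congr rfl fun i _ => ?_
  have := hf i
  simp only [Pi.sub_apply, Pi.smul_apply, smul_eq_mul] at this ⊢
  omega

end Arithmetic

section PebblingBound

variable {V W : Type*} [DecidableEq V] [DecidableEq W] [Fintype V] [Fintype W]
  {G : SimpleGraph V} {H : SimpleGraph W} {N : ℕ}

def PebblingBound (G : SimpleGraph V) (N : ℕ) : Prop :=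
  ∀ D v, N ≤ ∑ x, D x → Reach 2 G 1 D v

/-- As `(D x + 1) / 2 = ⌈D x / 2⌉`, the hypothesis says that the number of pebbles plus the number
of vertices holding an odd number of them exceeds `2 * N`: a variant of Chung's 2-pebbling
property. -/
def TwoPebblingBound (G : SimpleGraph V) (N : ℕ) : Prop :=
  ∀ D v, N < ∑ x, (D x + 1) / 2 → Reach 2 G 2 D v

theorem PebblingBound.of_unique [Unique V] : PebblingBound G 1 := fun D v hD =>
  ⟨D, .refl, by simpa [Fintype.sum_unique, Unique.eq_default v] using hD⟩

theorem TwoPebblingBound.of_unique [Unique V] : TwoPebblingBound G 1 := fun D v hD =>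
  ⟨D, .refl, by simp only [Fintype.sum_unique, Unique.eq_default v] at hD ⊢; omega⟩

theorem PebblingBound.of_iso (e : G ≃g H) (h : PebblingBound G N) : PebblingBound H N :=
  fun D _ hD => .of_iso e <| h _ _ <| hD.trans_eq (e.toEquiv.sum_comp D).symm

theorem TwoPebblingBound.of_iso (e : G ≃g H) (h : TwoPebblingBound G N) : TwoPebblingBound H N :=
  fun D _ hD => .of_iso e <| h _ _ <| hD.trans_eq (e.toEquiv.sum_comp fun y => (D y + 1) / 2).symm

end PebblingBound

section BoxProd

variable {V : Type*} [DecidableEq V] {G : SimpleGraph V} {q k : ℕ}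

omit [DecidableEq V] in
theorem extend_prodMk_apply (c : Bool) (A : V → ℕ) (p : Bool × V) :
    extend (Prod.mk c) A 0 p = if p.1 = c then A p.2 else 0 := by
  obtain ⟨a, x⟩ := p
  by_cases h : a = c
  · subst h
    simp [(Prod.mk_right_injective a).extend_apply]
  · rw [extend_apply' _ _ _ fun ⟨y, hy⟩ => h (congrArg Prod.fst hy).symm]
    simp [h]

omit [DecidableEq V] in
theorem exists_eq_extend_prodMk_add (D : Bool × V → ℕ) (c : Bool) :
    ∃ A B : V → ℕ, D = extend (Prod.mk c) A 0 + extend (Prod.mk (!c)) B 0 :=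
  ⟨fun x => D (c, x), fun x => D (!c, x), funext fun ⟨a, x⟩ => by
    cases a <;> cases c <;> simp [extend_prodMk_apply]⟩

omit [DecidableEq V] in
theorem sum_extend_prodMk_add [Fintype V] (c : Bool) (A B : V → ℕ) (g : ℕ → ℕ) :
    ∑ p, g ((extend (Prod.mk c) A 0 + extend (Prod.mk (!c)) B 0) p) =
      ∑ x, g (A x) + ∑ x, g (B x) := by
  rw [Fintype.sum_prod_type, Fintype.sum_bool]
  cases c <;> simp [extend_prodMk_apply, add_comm]

theorem Reach.extend_prodMk (c : Bool) {A : V → ℕ} {w : V} (h : Reach q G k A w) :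
    Reach q (⊤ □ G) k (extend (Prod.mk c) A 0) (c, w) :=
  h.map (boxProdRight ⊤ G c)

theorem Reach.extend_prodMk_not (c : Bool) {B : V → ℕ} {w : V} (h : Reach q G q B w) :
    Reach q (⊤ □ G) 1 (extend (Prod.mk (!c)) B 0) (c, w) :=
  (h.map (boxProdRight ⊤ G (!c))).of_adj (by simp)

theorem moves_transfer_pairs [Finite V] (c : Bool) {A B f : V → ℕ} (hf : 2 • f ≤ B) :
    Moves 2 (⊤ □ G) (extend (Prod.mk c) A 0 + extend (Prod.mk (!c)) B 0)
      (extend (Prod.mk c) (A + f) 0 + extend (Prod.mk (!c)) (B - 2 • f : V → ℕ) 0) := by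
  have hpairs : Moves 2 (⊤ □ G) (extend (Prod.mk (!c)) (2 • f) 0) (extend (Prod.mk c) f 0) :=
    moves_extend_nsmul (boxProdRight ⊤ G (!c)) (boxProdRight ⊤ G c) (fun x => by simp) f
  have hB : B = (B - 2 • f) + 2 • f := (tsub_add_cancel_of_le hf).symm
  generalize B - 2 • f = B' at hB ⊢
  subst hB
  rw [extend_add_zero, extend_add_zero]
  convert Moves.add (.refl (a := extend (Prod.mk c) A 0 + extend (Prod.mk (!c)) B' 0)) hpairs
    using 1 <;> abel

end BoxProd

section BoxProdBound

variable {V : Type*} [DecidableEq V] [Fintype V] {G : SimpleGraph V} {N : ℕ}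

theorem PebblingBound.boxProd_top (h₁ : PebblingBound G N) (h₂ : TwoPebblingBound G N) :
    PebblingBound ((⊤ : SimpleGraph Bool) □ G) (2 * N) := by
  rintro D ⟨c, w⟩ hD
  obtain ⟨A, B, rfl⟩ := exists_eq_extend_prodMk_add D c
  have hsum : ∑ p, (extend (Prod.mk c) A 0 + extend (Prod.mk (!c)) B 0) p = ∑ x, A x + ∑ x, B x :=
    sum_extend_prodMk_add c A B id
  by_cases hB : N < ∑ x, (B x + 1) / 2
  · exact ((h₂ B w hB).extend_prodMk_not c).mono le_add_self
  have hf : 2 • (fun x => B x / 2) ≤ B := fun x => by simp only [Pi.smul_apply, smul_eq_mul]; omega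
  refine .of_moves (moves_transfer_pairs c hf) (((h₁ _ w ?_).extend_prodMk c).mono le_self_add)
  have := sum_div_two_add_sum_add_one_div_two B
  simp only [Pi.add_apply, Finset.sum_add_distrib]
  omega

theorem TwoPebblingBound.boxProd_top (hcard : Fintype.card V ≤ N) (h₁ : PebblingBound G N)
    (h₂ : TwoPebblingBound G N) : TwoPebblingBound ((⊤ : SimpleGraph Bool) □ G) (2 * N) := by
  rintro D ⟨c, w⟩ hD
  obtain ⟨A, B, rfl⟩ := exists_eq_extend_prodMk_add D c
  rw [sum_extend_prodMk_add c A B fun m => (m + 1) / 2] at hD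
  by_cases hA : N < ∑ x, (A x + 1) / 2
  · exact ((h₂ A w hA).extend_prodMk c).mono le_self_add
  have hAsum := sum_add_one_div_two_le_sum A
  have hBpairs := sum_add_one_div_two_le_sum_div_two_add_card B
  obtain ⟨f, hfB, hfsum⟩ := Finset.exists_le_sum_eq Finset.univ (fun x => B x / 2)
    (t := N - ∑ x, A x) (by omega)
  have hf : 2 • f ≤ B := fun x => by
    have := hfB x
    simp only [Pi.smul_apply, smul_eq_mul] at this ⊢
    omega
  have hBf := sum_tsub_two_nsmul_add_one_div_two hf
  refine .of_moves (moves_transfer_pairs c hf) <|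
    ((h₁ (A + f) w ?_).extend_prodMk c).add ((h₂ (B - 2 • f) w ?_).extend_prodMk_not c)
  · simp only [Pi.add_apply, Finset.sum_add_distrib]
    omega
  · omega

end BoxProdBound

section Cube

theorem cubeGraph_adj {n : ℕ} {x y : Fin n → Bool} :
    (cubeGraph n).Adj x y ↔ hammingDist x y = 1 := by
  change x ≠ y ∧ (hammingDist x y = 1 ∨ hammingDist y x = 1) ↔ _
  rw [hammingDist_comm y x, or_self]
  exact ⟨And.right, fun h => ⟨fun hxy => by simp [hxy] at h, h⟩⟩

theorem hammingDist_cons {n : ℕ} (a b : Bool) (x y : Fin n → Bool) :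
    hammingDist (Fin.cons a x : Fin (n + 1) → Bool) (Fin.cons b y) =
      (if a = b then 0 else 1) + hammingDist x y := by
  simp only [hammingDist, Finset.card_filter, Fin.sum_univ_succ, Fin.cons_zero, Fin.cons_succ,
    ite_not]

def cubeGraphSuccIso (n : ℕ) : ((⊤ : SimpleGraph Bool) □ cubeGraph n) ≃g cubeGraph (n + 1) where
  toEquiv := Fin.consEquiv fun _ => Bool
  map_rel_iff' := by
    rintro ⟨a, x⟩ ⟨b, y⟩
    change (cubeGraph (n + 1)).Adj (Fin.cons a x) (Fin.cons b y) ↔ _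
    simp only [cubeGraph_adj, hammingDist_cons, boxProd_adj, top_adj, ← hammingDist_eq_zero]
    cases a <;> cases b <;> simp

theorem cubeGraph_pebblingBound (n : ℕ) :
    PebblingBound (cubeGraph n) (2 ^ n) ∧ TwoPebblingBound (cubeGraph n) (2 ^ n) := by
  induction n with
  | zero => exact ⟨.of_unique, .of_unique⟩
  | succ n ih =>
    obtain ⟨h₁, h₂⟩ := ih
    have hcard : Fintype.card (Fin n → Bool) ≤ 2 ^ n := by simp
    rw [pow_succ']
    exact ⟨(h₁.boxProd_top h₂).of_iso (cubeGraphSuccIso n),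
      (h₂.boxProd_top hcard h₁).of_iso (cubeGraphSuccIso n)⟩

theorem not_solvable_cubeGraph (n : ℕ) :
    ¬ Solvable 2 (cubeGraph n) (Pi.single (fun _ => true) (2 ^ n - 1)) fun _ => false := by
  refine not_solvable_of_sum_mul_lt (w := fun x => 2 ^ (n - hammingDist x fun _ => false))
    (fun u u' hadj => ?_) ?_
  · have := hammingDist_triangle u u' fun _ => false
    have := cubeGraph_adj.mp hadj
    calc 2 ^ (n - hammingDist u' fun _ => false)
        ≤ 2 ^ (n - hammingDist u (fun _ => false) + 1) := Nat.pow_le_pow_right two_pos (by omega)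
      _ = 2 * 2 ^ (n - hammingDist u fun _ => false) := pow_succ' _ _
  · simp [Pi.single_apply, hammingDist]

end Cube

/-- the 2-pebbling number of the hypercube `Q_n` is `2^n`. -/
theorem stmt8 (n : ℕ) :
    (∀ D : (Fin n → Bool) → ℕ, (∑ w, D w) = 2 ^ n →
        ∀ v, Solvable 2 (cubeGraph n) D v) ∧
    (∃ D : (Fin n → Bool) → ℕ, (∑ w, D w) = 2 ^ n - 1 ∧
        ∃ v, ¬ Solvable 2 (cubeGraph n) D v) :=
  ⟨fun D hD v => solvable_iff_reach.mpr <| (cubeGraph_pebblingBound n).1 D v hD.ge,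
    ⟨_, by simp, _, not_solvable_cubeGraph n⟩⟩
end

section
/- If Conjecture: there is a constant C > 0 such that P_{1/2}(G × H) ≤ C · P_{1/2}(G) · P_{1/2}(H) for all graphs G, H were true, then from P_{1/2}(Q_{n_0}) ≤ 2^{n_0}/(2C) for some n_0, it follows by induction that P_{1/2}(Q_{2^s n_0}) ≤ 2^{(1 - 1/n_0) 2^s n_0} for all s ≥ 0; in particular this contradicts any lower bound of the form P_{1/2}(Q_n) ≥ 2^{n(1-ε)} for all ε > 0 and large n. -/
/-- `P_{1/2}(Q_n)`: the least `k` such that a uniformly random configuration of `k`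
pebbles on `Q_n` is solvable (under 2-pebbling) with probability at least `1/2`. -/
noncomputable def phalfCube (n : ℕ) : ℕ :=
  sInf {k : ℕ |
    Nat.card {D : (Fin n → Bool) → ℕ // (∑ w, D w) = k} ≤
      2 * Nat.card {D : (Fin n → Bool) → ℕ //
            (∑ w, D w) = k ∧ ∀ v, Solvable 2 (cubeGraph n) D v}}

lemma solvable_of_one_le {V : Type*} [DecidableEq V] {q : ℕ} {G : SimpleGraph V}
    {D : V → ℕ} {v : V} (h : 1 ≤ D v) : Solvable q G D v :=
  ⟨D, .refl, h⟩

/-- `Q_0` has a single vertex, so one pebble already sits on every target. -/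
lemma phalfCube_zero_le_one : phalfCube 0 ≤ 1 := by
  refine Nat.sInf_le (le_of_eq_of_le (Nat.card_congr (Equiv.subtypeEquivRight fun D => ?_))
    (Nat.le_mul_of_pos_left _ two_pos))
  refine ⟨fun hD => ⟨hD, fun v => solvable_of_one_le ?_⟩, And.left⟩
  rw [Fintype.sum_subsingleton _ v] at hD
  exact hD.ge

lemma le_mul_apply_of_apply_zero_le_one {f : ℕ → ℝ} {C : ℝ} (hC : 0 ≤ C) (hf : ∀ n, 0 ≤ f n)
    (h0 : f 0 ≤ 1) (hmul : ∀ a b, f (a + b) ≤ C * f a * f b) (m : ℕ) : f m ≤ C * f m :=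
  calc f m ≤ C * f 0 * f m := by simpa using hmul 0 m
    _ ≤ C * 1 * f m := by gcongr; exact hf m
    _ = C * f m := by ring

lemma mul_apply_two_pow_mul_le_pow {f : ℕ → ℝ} {C : ℝ} (hC : 0 ≤ C) (hf : ∀ n, 0 ≤ f n)
    (hmul : ∀ a b, f (a + b) ≤ C * f a * f b) (n s : ℕ) :
    C * f (2 ^ s * n) ≤ (C * f n) ^ 2 ^ s := by
  induction s with
  | zero => simp
  | succ s ih =>
    calc C * f (2 ^ (s + 1) * n) = C * f (2 ^ s * n + 2 ^ s * n) := by ring_nf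
      _ ≤ C * (C * f (2 ^ s * n) * f (2 ^ s * n)) := by gcongr; exact hmul _ _
      _ = (C * f (2 ^ s * n)) ^ 2 := by ring
      _ ≤ ((C * f n) ^ 2 ^ s) ^ 2 := by gcongr; exact mul_nonneg hC (hf _)
      _ = (C * f n) ^ 2 ^ (s + 1) := by ring

lemma not_eventually_two_rpow_le_of_frequently {f : ℕ → ℝ} {δ : ℝ} (hδ : 0 < δ)
    (hfreq : ∃ᶠ n : ℕ in Filter.atTop, f n ≤ (2 : ℝ) ^ ((1 - δ) * n)) :
    ¬ ∀ ε : ℝ, 0 < ε → ∀ᶠ n : ℕ in Filter.atTop, (2 : ℝ) ^ ((n : ℝ) * (1 - ε)) ≤ f n := by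
  intro hlower
  obtain ⟨n, ⟨hupper, hn⟩, hlow⟩ :=
    ((hfreq.and_eventually (Filter.eventually_gt_atTop 0)).and_eventually
      (hlower (δ / 2) (half_pos hδ))).exists
  have hn : (0 : ℝ) < n := by exact_mod_cast hn
  have hexp : (1 - δ) * n < n * (1 - δ / 2) := by nlinarith
  exact (Real.rpow_lt_rpow_of_exponent_lt one_lt_two hexp).not_ge (hlow.trans hupper)

/-- if `P_{1/2}` were submultiplicative with constant `C` along
`Q_{a+b} = Q_a × Q_b` and `P_{1/2}(Q_{n₀}) ≤ 2^{n₀}/(2C)` for some `n₀`, then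
`P_{1/2}(Q_{2^s n₀}) ≤ 2^{(1 - 1/n₀) 2^s n₀}` for all `s`; in particular no lower
bound of the form `P_{1/2}(Q_n) ≥ 2^{n(1-ε)}` for every `ε > 0` can hold. -/
theorem stmt12 (C : ℝ) (hC : 0 < C)
    (hconj : ∀ a b : ℕ, (phalfCube (a + b) : ℝ) ≤ C * phalfCube a * phalfCube b)
    (n₀ : ℕ) (hn₀ : 0 < n₀) (h₀ : (phalfCube n₀ : ℝ) ≤ 2 ^ n₀ / (2 * C)) :
    (∀ s : ℕ, (phalfCube (2 ^ s * n₀) : ℝ) ≤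
        (2 : ℝ) ^ ((1 - 1 / (n₀ : ℝ)) * ((2 ^ s * n₀ : ℕ) : ℝ))) ∧
    ¬ (∀ ε : ℝ, 0 < ε → ∀ᶠ n : ℕ in Filter.atTop,
        (2 : ℝ) ^ ((n : ℝ) * (1 - ε)) ≤ (phalfCube n : ℝ)) := by
  have hbase : C * phalfCube n₀ ≤ (2 : ℝ) ^ ((n₀ : ℝ) - 1) := by
    rw [Real.rpow_sub two_pos, Real.rpow_one, Real.rpow_natCast]
    have h₀' := (le_div_iff₀ (by positivity)).mp h₀
    rw [le_div_iff₀ two_pos]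
    linarith
  have hbound (s : ℕ) : (phalfCube (2 ^ s * n₀) : ℝ) ≤
      (2 : ℝ) ^ ((1 - 1 / (n₀ : ℝ)) * ((2 ^ s * n₀ : ℕ) : ℝ)) :=
    calc (phalfCube (2 ^ s * n₀) : ℝ) ≤ C * phalfCube (2 ^ s * n₀) :=
        le_mul_apply_of_apply_zero_le_one hC.le (fun _ => Nat.cast_nonneg _)
          (mod_cast phalfCube_zero_le_one) hconj _
      _ ≤ (C * phalfCube n₀) ^ 2 ^ s :=
        mul_apply_two_pow_mul_le_pow hC.le (fun _ => Nat.cast_nonneg _) hconj n₀ s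
      _ ≤ ((2 : ℝ) ^ ((n₀ : ℝ) - 1)) ^ 2 ^ s := by gcongr
      _ = (2 : ℝ) ^ ((1 - 1 / (n₀ : ℝ)) * ((2 ^ s * n₀ : ℕ) : ℝ)) := by
        rw [← Real.rpow_natCast, ← Real.rpow_mul zero_le_two]
        congr 1
        push_cast
        field_simp
  refine ⟨hbound, not_eventually_two_rpow_le_of_frequently (δ := 1 / n₀) (by positivity) ?_⟩
  refine Filter.frequently_atTop.mpr fun N => ⟨2 ^ N * n₀, ?_, hbound N⟩
  exact (Nat.lt_two_pow_self).le.trans (Nat.le_mul_of_pos_right _ hn₀)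
end
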